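/- Let m, n be positive integers and let c be the diagonal coloring of the m×n grid graph, defined by c(i,j) = i + j (mod 3) as an element of ZMod 3. Then the minimum cardinality of a forcing set for c is exactly m + n − 2: there exists a forcing set for c of cardinality m + n − 2, and every forcing set for c has cardinality at least m + n − 2. -/

import Mathlib

/-- Two vertices of the `m × n` grid graph are adjacent:
`(i,j)` is adjacent to `(i',j')` iff `|i-i'| + |j-j'| = 1`. -/
def GridAdj {m n : ℕ} (u v : Fin m × Fin n) : Prop :=
  |(u.1.val : ℤ) - (v.1.val : ℤ)| + |(u.2.val : ℤ) - (v.2.val : ℤ)| = 1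

/-- A proper `3`-coloring of the `m × n` grid graph. -/
def IsProperColoring {m n : ℕ} (c : Fin m × Fin n → ZMod 3) : Prop :=
  ∀ u v, GridAdj u v → c u ≠ c v

/-- The set of (unordered) edges of the `m × n` grid graph. -/
def GridEdges (m n : ℕ) : Set (Sym2 (Fin m × Fin n)) :=
  {e | ∃ u v, GridAdj u v ∧ e = s(u, v)}

/-- `F` is a forcing set for the proper `3`-coloring `c`: the only proper
`3`-coloring agreeing with `c` at the base vertex `v₀ = (0,0)` and having the same
color differences as `c` across every edge of `F` is `c` itself. -/
def IsForcing {m n : ℕ} [NeZero m] [NeZero n] (c : Fin m × Fin n → ZMod 3)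
    (F : Set (Sym2 (Fin m × Fin n))) : Prop :=
  ∀ c' : Fin m × Fin n → ZMod 3, IsProperColoring c' →
    c' (0, 0) = c (0, 0) →
    (∀ u v : Fin m × Fin n, GridAdj u v → s(u, v) ∈ F → c' v - c' u = c v - c u) →
    c' = c

/-- The checkerboard `3`-coloring of the grid, corresponding to the standard
Miura-ori mountain-valley assignment. -/
def checkerboard {m n : ℕ} : Fin m × Fin n → ZMod 3 :=
  fun v => if (v.1.val + v.2.val) % 2 = 0 then 0 else 1

/-- The diagonal coloring of the `m × n` grid graph: `c(i,j) = i + j (mod 3)`. -/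
def diagonalColoring {m n : ℕ} : Fin m × Fin n → ZMod 3 :=
  fun v => ((v.1.val + v.2.val : ℕ) : ZMod 3)

/-!
Cutting the grid between two consecutive rows (or columns) and adding `1` to every colour on
one side turns the diagonal colouring into another proper colouring with the same base colour;
the two differ in colour differences exactly across the edges of that cut. So a forcing set
meets each of the `(m - 1) + (n - 1)` cuts, and the cuts are pairwise disjoint. Conversely,
the Γ formed by row `0` and the last column forces the colour along itself, and every other
vertex `(i + 1, j)` then sees its neighbours `(i, j)` and `(i + 1, j + 1)`, which carry two
different colours, leaving a single choice.
-/

lemma gridAdj_iff {m n : ℕ} {u v : Fin m × Fin n} : GridAdj u v ↔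
    (u.1.val = v.1.val ∧ (u.2.val + 1 = v.2.val ∨ v.2.val + 1 = u.2.val)) ∨
    (u.2.val = v.2.val ∧ (u.1.val + 1 = v.1.val ∨ v.1.val + 1 = u.1.val)) := by
  unfold GridAdj
  rw [Int.abs_eq_natAbs, Int.abs_eq_natAbs]
  omega

lemma GridAdj.symm {m n : ℕ} {u v : Fin m × Fin n} (h : GridAdj u v) : GridAdj v u := by
  rw [gridAdj_iff] at h ⊢
  omega

lemma gridAdj_castSucc_succ_left {m n : ℕ} (i : Fin m) (j : Fin n) :
    GridAdj (i.castSucc, j) (i.succ, j) :=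
  gridAdj_iff.2 (Or.inr ⟨rfl, Or.inl rfl⟩)

lemma gridAdj_castSucc_succ_right {m n : ℕ} (i : Fin m) (j : Fin n) :
    GridAdj (i, j.castSucc) (i, j.succ) :=
  gridAdj_iff.2 (Or.inl ⟨rfl, Or.inl rfl⟩)

lemma ZMod.eq_neg_add_of_ne_three {a b x : ZMod 3} (hab : a ≠ b) (hxa : x ≠ a) (hxb : x ≠ b) :
    x = -(a + b) := by
  revert a b x
  decide

section Diagonal

variable {m n : ℕ}

lemma diagonalColoring_eq_add_one {u v : Fin m × Fin n}
    (h : u.1.val + u.2.val + 1 = v.1.val + v.2.val) :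
    diagonalColoring v = diagonalColoring u + 1 := by
  simp only [diagonalColoring, ← h, Nat.cast_add, Nat.cast_one]

lemma isProperColoring_diagonalColoring :
    IsProperColoring (diagonalColoring (m := m) (n := n)) := by
  have hne : ∀ x : ZMod 3, x + 1 ≠ x := by decide
  intro u v huv heq
  rcases (by rw [gridAdj_iff] at huv; omega :
      u.1.val + u.2.val + 1 = v.1.val + v.2.val ∨ v.1.val + v.2.val + 1 = u.1.val + u.2.val)
    with h | h
  · exact hne _ (diagonalColoring_eq_add_one h ▸ heq).symm
  · exact hne _ (diagonalColoring_eq_add_one h ▸ heq)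

lemma diagonalColoring_castSucc_ne_succ (i : Fin m) (j : Fin n) :
    diagonalColoring (i.castSucc, j.castSucc) ≠ diagonalColoring (i.succ, j.succ) := by
  have hne : ∀ x : ZMod 3, x ≠ x + 1 + 1 := by decide
  rw [diagonalColoring_eq_add_one (u := (i.castSucc, j.succ)) (v := (i.succ, j.succ))
      (by simp; omega),
    diagonalColoring_eq_add_one (u := (i.castSucc, j.castSucc)) (v := (i.castSucc, j.succ))
      (by simp; omega)]
  exact hne _

end Diagonal

section Cuts

variable {m n : ℕ}

/-- Labels an edge by the cut it crosses: `inl i` for the one between rows `i - 1` and `i`,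
`inr j` for the one between columns `j - 1` and `j`. Non-edges get junk labels. -/
def edgeCut : Sym2 (Fin m × Fin n) → Fin m ⊕ Fin n :=
  Sym2.lift ⟨fun u v => if u.1 = v.1 then .inr (max u.2 v.2) else .inl (max u.1 v.1),
    fun u v => by simp only [@eq_comm _ u.1, max_comm]⟩

lemma edgeCut_mk (u v : Fin m × Fin n) :
    edgeCut s(u, v) = if u.1 = v.1 then .inr (max u.2 v.2) else .inl (max u.1 v.1) :=
  rfl

def cutEdge : Fin m ⊕ Fin n → Sym2 (Fin (m + 1) × Fin (n + 1))
  | .inl i => s((i.castSucc, Fin.last n), (i.succ, Fin.last n))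
  | .inr j => s((0, j.castSucc), (0, j.succ))

lemma edgeCut_cutEdge (x : Fin m ⊕ Fin n) :
    edgeCut (cutEdge x) = Sum.map Fin.succ Fin.succ x := by
  cases x <;> simp [cutEdge, edgeCut_mk, Fin.castSucc_lt_succ.ne, Fin.castSucc_le_succ]

lemma cutEdge_injective : Function.Injective (cutEdge (m := m) (n := n)) :=
  .of_comp (f := edgeCut) <| by
    simpa only [Function.comp_def, edgeCut_cutEdge] using
      Sum.map_injective.2 ⟨Fin.succ_injective _, Fin.succ_injective _⟩

lemma cutEdge_mem_gridEdges (x : Fin m ⊕ Fin n) : cutEdge x ∈ GridEdges (m + 1) (n + 1) := by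
  cases x with
  | inl i => exact ⟨_, _, gridAdj_castSucc_succ_left i _, rfl⟩
  | inr j => exact ⟨_, _, gridAdj_castSucc_succ_right _ j, rfl⟩

/-- The Γ: row `0` together with the last column. -/
noncomputable def gammaEdges (m n : ℕ) : Finset (Sym2 (Fin (m + 1) × Fin (n + 1))) :=
  Finset.univ.image cutEdge

lemma card_gammaEdges : (gammaEdges m n).card = m + n := by
  rw [gammaEdges, Finset.card_image_of_injective _ cutEdge_injective, Finset.card_univ,
    Fintype.card_sum, Fintype.card_fin, Fintype.card_fin]

lemma coe_gammaEdges_subset_gridEdges : ↑(gammaEdges m n) ⊆ GridEdges (m + 1) (n + 1) := by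
  simpa [gammaEdges, Set.range_subset_iff] using cutEdge_mem_gridEdges

end Cuts

section Forcing

variable {m n : ℕ}

lemma isForcing_gammaEdges {c : Fin (m + 1) × Fin (n + 1) → ZMod 3} (hc : IsProperColoring c)
    (hdiag : ∀ (i : Fin m) (j : Fin n), c (i.castSucc, j.castSucc) ≠ c (i.succ, j.succ)) :
    IsForcing c ↑(gammaEdges m n) := by
  intro c' hc' h0 hF
  have propagate :
      ∀ x u v, cutEdge x = s(u, v) → GridAdj u v → c' u = c u → c' v = c v := by
    intro x u v hx huv hu
    have := hF u v huv (hx ▸ Finset.mem_image_of_mem _ (Finset.mem_univ x))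
    rw [hu] at this
    exact sub_left_inj.1 this
  have row_zero : ∀ j, c' (0, j) = c (0, j) :=
    Fin.induction h0 fun j => propagate (.inr j) _ _ rfl (gridAdj_castSucc_succ_right _ j)
  have col_last : ∀ i, c' (i, Fin.last n) = c (i, Fin.last n) :=
    Fin.induction (row_zero _) fun i => propagate (.inl i) _ _ rfl (gridAdj_castSucc_succ_left i _)
  funext ⟨i, j⟩
  induction i using Fin.induction generalizing j with
  | zero => exact row_zero j
  | succ i ih_row =>
    induction j using Fin.reverseInduction with
    | last => exact col_last _
    | cast j ih_col =>
      have hup := gridAdj_castSucc_succ_left i j.castSucc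
      have hright := gridAdj_castSucc_succ_right i.succ j
      rw [ZMod.eq_neg_add_of_ne_three (hdiag i j) (hc _ _ hup).symm (hc _ _ hright),
        ← ih_row, ← ih_col]
      exact ZMod.eq_neg_add_of_ne_three (by rw [ih_row, ih_col]; exact hdiag i j)
        (hc' _ _ hup).symm (hc' _ _ hright)

end Forcing

section Shift

variable {m n : ℕ}

open Classical in
noncomputable def shiftColoring (c : Fin m × Fin n → ZMod 3) (p : Fin m × Fin n → Prop) :
    Fin m × Fin n → ZMod 3 :=
  fun v => c v + if p v then 1 else 0

lemma isProperColoring_shiftColoring {c : Fin m × Fin n → ZMod 3} {p : Fin m × Fin n → Prop}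
    (hc : IsProperColoring c) (hp : ∀ u v, GridAdj u v → ¬ p u → p v → c v = c u + 1) :
    IsProperColoring (shiftColoring c p) := by
  have h2 : ∀ x : ZMod 3, x + 1 + 1 ≠ x := by decide
  intro u v huv heq
  by_cases hu : p u <;> by_cases hv : p v <;>
    simp only [shiftColoring, hu, hv, if_true, if_false, add_zero] at heq
  · exact hc u v huv (add_right_cancel heq)
  · exact h2 _ (by rwa [hp v u huv.symm hv hu] at heq)
  · exact h2 _ (by rw [hp u v huv hu hv] at heq; exact heq.symm)
  · exact hc u v huv heq

lemma IsForcing.exists_crossing [NeZero m] [NeZero n] {c : Fin m × Fin n → ZMod 3}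
    {F : Set (Sym2 (Fin m × Fin n))} {p : Fin m × Fin n → Prop} {w : Fin m × Fin n}
    (hF : IsForcing c F) (hshift : IsProperColoring (shiftColoring c p)) (h0 : ¬ p (0, 0))
    (hw : p w) : ∃ u v, GridAdj u v ∧ s(u, v) ∈ F ∧ ¬ p u ∧ p v := by
  by_contra! hcross
  have hside : ∀ u v, GridAdj u v → s(u, v) ∈ F → (p u ↔ p v) := fun u v huv he =>
    ⟨fun hu => by_contra (hcross v u huv.symm (Sym2.eq_swap ▸ he) · hu),
      fun hv => by_contra (hcross u v huv he · hv)⟩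
  have := congrFun (hF _ hshift (by simp [shiftColoring, h0]) fun u v huv he => by
    by_cases hv : p v
    · simp [shiftColoring, hv, (hside u v huv he).2 hv]
    · simp [shiftColoring, hv, mt (hside u v huv he).1 hv]) w
  simp [shiftColoring, hw] at this

end Shift

section LowerBound

variable {m n : ℕ}

def cutSide : Fin m ⊕ Fin n → Fin (m + 1) × Fin (n + 1) → Prop
  | .inl i, v => i.castSucc < v.1
  | .inr j, v => j.castSucc < v.2

lemma val_add_one_of_crossing {x : Fin m ⊕ Fin n} {u v : Fin (m + 1) × Fin (n + 1)}
    (huv : GridAdj u v) (hu : ¬ cutSide x u) (hv : cutSide x v) :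
    u.1.val + u.2.val + 1 = v.1.val + v.2.val := by
  rw [gridAdj_iff] at huv
  cases x <;> simp only [cutSide, not_lt, Fin.lt_def, Fin.val_castSucc] at hu hv <;>
    omega

lemma edgeCut_of_crossing {x : Fin m ⊕ Fin n} {u v : Fin (m + 1) × Fin (n + 1)}
    (huv : GridAdj u v) (hu : ¬ cutSide x u) (hv : cutSide x v) :
    edgeCut s(u, v) = Sum.map Fin.succ Fin.succ x := by
  rw [gridAdj_iff] at huv
  cases x with
  | inl i =>
    simp only [cutSide, not_lt, Fin.lt_def, Fin.val_castSucc] at hu hv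
    rw [edgeCut_mk, if_neg (by rw [Fin.ext_iff]; omega)]
    simp only [Sum.map_inl, Sum.inl.injEq, Fin.ext_iff, Fin.coe_max, Fin.val_succ]
    omega
  | inr j =>
    simp only [cutSide, not_lt, Fin.lt_def, Fin.val_castSucc] at hu hv
    rw [edgeCut_mk, if_pos (Fin.ext (by omega))]
    simp only [Sum.map_inr, Sum.inr.injEq, Fin.ext_iff, Fin.coe_max, Fin.val_succ]
    omega

lemma isProperColoring_shiftColoring_diagonalColoring (x : Fin m ⊕ Fin n) :
    IsProperColoring (shiftColoring diagonalColoring (cutSide x)) :=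
  isProperColoring_shiftColoring isProperColoring_diagonalColoring fun _ _ huv hu hv =>
    diagonalColoring_eq_add_one (val_add_one_of_crossing huv hu hv)

lemma add_le_card_of_isForcing_diagonalColoring {F : Finset (Sym2 (Fin (m + 1) × Fin (n + 1)))}
    (hF : IsForcing diagonalColoring (F : Set (Sym2 (Fin (m + 1) × Fin (n + 1))))) :
    m + n ≤ F.card := by
  have hcut : ∀ x : Fin m ⊕ Fin n, ∃ e ∈ F, edgeCut e = Sum.map Fin.succ Fin.succ x := by
    intro x
    obtain ⟨u, v, huv, he, hu, hv⟩ := hF.exists_crossing (w := (Fin.last m, Fin.last n))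
      (isProperColoring_shiftColoring_diagonalColoring x)
      (by cases x <;> simp [cutSide]) (by cases x <;> simp [cutSide, Fin.castSucc_lt_last])
    exact ⟨_, he, edgeCut_of_crossing huv hu hv⟩
  choose e heF hcut using hcut
  calc m + n = (Finset.univ : Finset (Fin m ⊕ Fin n)).card := by simp
    _ ≤ F.card := Finset.card_le_card_of_injOn e (fun x _ => heF x) fun x _ y _ hxy =>
      Sum.map_injective.2 ⟨Fin.succ_injective _, Fin.succ_injective _⟩
        (by rw [← hcut, ← hcut, hxy])

end LowerBound

/-- **Theorem 2 of the paper (tight lower bound).** The minimum cardinality of a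
forcing set for the diagonal coloring of the `m × n` grid graph is exactly
`m + n - 2`, the smallest possible for any Miura-ori pattern. -/
theorem diagonal_min_forcing_set {m n : ℕ} [NeZero m] [NeZero n] :
    (∃ F : Finset (Sym2 (Fin m × Fin n)), ↑F ⊆ GridEdges m n ∧
      IsForcing diagonalColoring (↑F : Set (Sym2 (Fin m × Fin n))) ∧
      F.card = m + n - 2) ∧
    (∀ F : Finset (Sym2 (Fin m × Fin n)), ↑F ⊆ GridEdges m n →
      IsForcing diagonalColoring (↑F : Set (Sym2 (Fin m × Fin n))) →
      m + n - 2 ≤ F.card) := by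
  obtain ⟨m, rfl⟩ := Nat.exists_eq_succ_of_ne_zero (NeZero.ne m)
  obtain ⟨n, rfl⟩ := Nat.exists_eq_succ_of_ne_zero (NeZero.ne n)
  rw [show m.succ + n.succ - 2 = m + n by omega]
  exact ⟨⟨gammaEdges m n, coe_gammaEdges_subset_gridEdges,
      isForcing_gammaEdges isProperColoring_diagonalColoring diagonalColoring_castSucc_ne_succ,
      card_gammaEdges⟩,
    fun _ _ hF => add_le_card_of_isForcing_diagonalColoring hF⟩
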